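/- arXiv:2402.18324 — 4 statements merged into one kernel-verified Lean document; each statement's English description precedes it below -/
import Mathlib

section
/- If a topology t on a set X is second countable, then every upper semicontinuous linear (total) preorder on X admits an upper semicontinuous real-valued order preserving (utility) representation. (Rader's theorem: second countable topologies are completely useful.) -/
/-!
Let `x ≺ y` be the strict part of `r`. By totality `{y | y ≺ x} = {y | ¬ r x y}`, so upper
semicontinuity says that these sets are open. From a countable basis one extracts a countable set
`D` that separates strictly ordered pairs, `y ≺ x → ∃ d ∈ D, y ≺ d ∧ r d x`: for basic open sets
`B`, `C`, pick a least point strictly above all of `B` if there is one, and a point strictly above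
all of `B` but not all of `C` if there is one. With positive summable weights `w` on `D`, the
function `g x = ∑_{d ∈ D, x ≺ d} w d` is a nonnegative sum of indicators of open sets, hence lower
semicontinuous, and it is strictly antitone for `r`; so `-g` is the required upper semicontinuous
utility.
-/

open Set TopologicalSpace

theorem Set.exists_countable_inter_nonempty {X ι : Type*} [Countable ι] (S : ι → Set X) :
    ∃ D : Set X, D.Countable ∧ ∀ i, (S i).Nonempty → (S i ∩ D).Nonempty :=
  ⟨range fun i : {i // (S i).Nonempty} => i.2.some, countable_range _,
    fun i hi => ⟨hi.some, hi.some_mem, ⟨i, hi⟩, rfl⟩⟩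

section IndicatorSum

variable {X ι : Type*} {U : ι → Set X} {w : ι → ℝ}

theorem summable_indicator_apply (hw : ∀ i, 0 ≤ w i) (hws : Summable w) (x : X) :
    Summable fun i => (U i).indicator (fun _ => w i) x :=
  hws.of_nonneg_of_le (fun i => indicator_nonneg (fun _ _ => hw i) x)
    (fun i => indicator_le_self' (fun _ _ => hw i) x)

theorem lowerSemicontinuous_tsum_indicator [TopologicalSpace X] (hU : ∀ i, IsOpen (U i))
    (hw : ∀ i, 0 ≤ w i) (hws : Summable w) :
    LowerSemicontinuous fun x => ∑' i, (U i).indicator (fun _ => w i) x := by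
  have hlub (x : X) := isLUB_hasSum (fun i => indicator_nonneg (fun _ _ => hw i) x)
    (summable_indicator_apply (U := U) hw hws x).hasSum
  have hsup : (fun x => ∑' i, (U i).indicator (fun _ => w i) x) =
      fun x => ⨆ s : Finset ι, ∑ i ∈ s, (U i).indicator (fun _ => w i) x :=
    funext fun x => (hlub x).ciSup_eq.symm
  rw [hsup]
  exact lowerSemicontinuous_ciSup (fun x => (hlub x).bddAbove) fun s =>
    lowerSemicontinuous_sum fun i _ => (hU i).lowerSemicontinuous_indicator (hw i)

theorem tsum_indicator_le_tsum_indicator (hw : ∀ i, 0 ≤ w i) (hws : Summable w) {x y : X}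
    (hxy : ∀ i, x ∈ U i → y ∈ U i) :
    ∑' i, (U i).indicator (fun _ => w i) x ≤ ∑' i, (U i).indicator (fun _ => w i) y := by
  refine (summable_indicator_apply hw hws x).tsum_le_tsum (fun i => ?_)
    (summable_indicator_apply hw hws y)
  by_cases hx : x ∈ U i
  · simp [hx, hxy i hx]
  · simpa [hx] using indicator_nonneg (fun _ _ => hw i) y

theorem tsum_indicator_lt_tsum_indicator (hw : ∀ i, 0 ≤ w i) (hws : Summable w) {x y : X}
    (hxy : ∀ i, x ∈ U i → y ∈ U i) {i : ι} (hwi : 0 < w i) (hx : x ∉ U i) (hy : y ∈ U i) :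
    ∑' i, (U i).indicator (fun _ => w i) x < ∑' i, (U i).indicator (fun _ => w i) y := by
  refine (summable_indicator_apply hw hws x).tsum_lt_tsum (i := i) (fun j => ?_) ?_
    (summable_indicator_apply hw hws y)
  · by_cases hxj : x ∈ U j
    · simp [hxj, hxy j hxj]
    · simpa [hxj] using indicator_nonneg (fun _ _ => hw j) y
  · simpa [hx, hy] using hwi

end IndicatorSum

section TotalPreorder

variable {X : Type*} [TopologicalSpace X] (r : X → X → Prop)
  (htrans : ∀ x y z, r x y → r y z → r x z) (htotal : ∀ x y, r x y ∨ r y x)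
  (hopen : ∀ x, IsOpen {y | ¬ r x y})
include htrans htotal hopen

theorem exists_countable_order_separating [SecondCountableTopology X] :
    ∃ D : Set X, D.Countable ∧ ∀ x y, ¬ r x y → ∃ d ∈ D, ¬ r d y ∧ r d x := by
  have hbasis := isBasis_countableBasis X
  have : Countable (countableBasis X) := (countable_countableBasis X).to_subtype
  let above (B : Set X) : Set X := {d | ∀ b ∈ B, ¬ r d b}
  obtain ⟨D₁, hD₁, hmin⟩ := exists_countable_inter_nonempty
    fun B : countableBasis X => {d ∈ above B | ∀ w ∈ above B, r d w}
  obtain ⟨D₂, hD₂, hdiff⟩ := exists_countable_inter_nonempty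
    fun BC : countableBasis X × countableBasis X => above BC.1 \ above BC.2
  refine ⟨D₁ ∪ D₂, hD₁.union hD₂, fun x y hxy => ?_⟩
  obtain ⟨B, hB, hyB, hBx⟩ := hbasis.exists_subset_of_mem_open hxy (hopen x)
  have hxB : x ∈ above B := fun b hb => hBx hb
  by_cases hxmin : ∀ w ∈ above B, r x w
  · obtain ⟨d, ⟨hdB, hdmin⟩, hdD⟩ := hmin ⟨B, hB⟩ ⟨x, hxB, hxmin⟩
    exact ⟨d, .inl hdD, hdB y hyB, hdmin x hxB⟩
  · obtain ⟨w, hwB, hxw⟩ : ∃ w ∈ above B, ¬ r x w := by simpa using hxmin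
    obtain ⟨C, hC, hwC, hCx⟩ := hbasis.exists_subset_of_mem_open hxw (hopen x)
    have hw_refl : r w w := (htotal w w).elim id id
    obtain ⟨d, ⟨hdB, hdC⟩, hdD⟩ :=
      hdiff (⟨B, hB⟩, ⟨C, hC⟩) ⟨w, hwB, fun h => h w hwC hw_refl⟩
    -- `d` is not strictly above `C`, and `C` lies strictly below `x`.
    obtain ⟨c, hcC, hdc⟩ : ∃ c ∈ C, r d c := by simpa [above] using hdC
    exact ⟨d, .inr hdD, hdB y hyB, htrans _ _ _ hdc ((htotal x c).resolve_left (hCx hcC))⟩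

theorem exists_upperSemicontinuous_utility_of_countable_order_separating {D : Set X}
    (hD : D.Countable) (hsep : ∀ x y, ¬ r x y → ∃ d ∈ D, ¬ r d y ∧ r d x) :
    ∃ f : X → ℝ, (∀ x y, r x y ↔ f x ≤ f y) ∧ ∀ c : ℝ, IsOpen {z | f z < c} := by
  obtain ⟨w, hw, _, hsum, -⟩ := hD.exists_pos_hasSum_le one_pos
  let U (d : D) : Set X := {y | ¬ r d y}
  let g (x : X) : ℝ := ∑' d : D, (U d).indicator (fun _ => w d) x
  have hw' (d : D) : 0 ≤ w d := (hw d).le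
  have hg_lsc : LowerSemicontinuous g :=
    lowerSemicontinuous_tsum_indicator (fun d => hopen d) hw' hsum.summable
  have hg_anti {x y : X} (hxy : r x y) : g y ≤ g x :=
    tsum_indicator_le_tsum_indicator hw' hsum.summable
      fun d hdy hdx => hdy (htrans _ _ _ hdx hxy)
  have hg_strict {x y : X} (hxy : ¬ r x y) : g x < g y := by
    obtain ⟨d, hdD, hdy, hdx⟩ := hsep x y hxy
    refine tsum_indicator_lt_tsum_indicator (i := ⟨d, hdD⟩) hw' hsum.summable
      (fun e hex hey => hex (htrans _ _ _ hey ((htotal x y).resolve_left hxy)))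
      (hw d) (fun h => h hdx) hdy
  refine ⟨fun x => -g x, fun x y => ⟨fun hxy => neg_le_neg (hg_anti hxy), fun h => ?_⟩,
    fun c => ?_⟩
  · by_contra hxy
    exact (hg_strict hxy).not_ge (neg_le_neg_iff.mp h)
  · convert hg_lsc.isOpen_preimage (-c) using 1
    ext z
    simp [neg_lt]

end TotalPreorder

theorem rader_second_countable_completely_useful_general
    {X : Type*} [TopologicalSpace X] [SecondCountableTopology X]
    (r : X → X → Prop)
    (htrans : ∀ x y z, r x y → r y z → r x z)
    (htotal : ∀ x y, r x y ∨ r y x)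
    (husc : ∀ x : X, IsOpen {y : X | r y x ∧ ¬ r x y}) :
    ∃ f : X → ℝ, (∀ x y, r x y ↔ f x ≤ f y) ∧ (∀ c : ℝ, IsOpen {z : X | f z < c}) := by
  have hopen (x : X) : IsOpen {y | ¬ r x y} := by
    convert husc x using 1
    ext y
    exact ⟨fun h => ⟨(htotal x y).resolve_left h, h⟩, And.right⟩
  obtain ⟨D, hD, hsep⟩ := exists_countable_order_separating r htrans htotal hopen
  exact exists_upperSemicontinuous_utility_of_countable_order_separating r htrans htotal hopen
    hD hsep

/-- Rader's theorem: on a second countable topological space, every upper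
semicontinuous linear (total) preorder admits an upper semicontinuous
real-valued order preserving representation. -/
theorem rader_second_countable_completely_useful
    {X : Type*} [TopologicalSpace X] [SecondCountableTopology X]
    (r : X → X → Prop)
    (hrefl : ∀ x, r x x) (htrans : ∀ x y z, r x y → r y z → r x z)
    (htotal : ∀ x y, r x y ∨ r y x)
    (husc : ∀ x : X, IsOpen {y : X | r y x ∧ ¬ r x y}) :
    ∃ f : X → ℝ, (∀ x y, r x y ↔ f x ≤ f y) ∧ (∀ c : ℝ, IsOpen {z : X | f z < c}) :=
  rader_second_countable_completely_useful_general r htrans htotal husc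
end

section
/- If a topology t on X is hereditarily separable, then there is no strictly decreasing transfinite chain of open sets indexed by the first uncountable ordinal; that is, there is no function O : ω₁ → t with O(β) ⊊ O(α) whenever α < β. -/
/-!
Pick `x α ∈ O α \ O (α + 1)` for every `α < ω₁`. The open set `O β` contains `x β` but no `x α`
with `α < β`, so a dense subset of `{x α | α < ω₁}` must have indices unbounded in `ω₁`, while
countably many indices are bounded since `ω₁` has uncountable cofinality.
-/

open Cardinal Ordinal Set

theorem Ordinal.exists_forall_lt_of_countable_Iio_omega_one {s : Set (Iio ω₁)}
    (hs : s.Countable) : ∃ j : Iio ω₁, ∀ i ∈ s, i < j := by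
  have : Countable s := hs.to_subtype
  have hsup : ⨆ i : s, (i : Ordinal) < ω₁ := iSup_lt_omega_one fun i => i.1.2
  refine ⟨⟨_, (isSuccLimit_omega 1).add_one_lt hsup⟩, fun i hi => ?_⟩
  exact Order.lt_add_one_iff.2 (Ordinal.le_iSup (fun i : s => (i : Ordinal)) ⟨i, hi⟩)

theorem not_separable_range_of_forall_lt_notMem {ι X : Type*} [TopologicalSpace X] [LT ι]
    (hbdd : ∀ s : Set ι, s.Countable → ∃ j, ∀ i ∈ s, i < j)
    {x : ι → X} {U : ι → Set X} (hU : ∀ i, IsOpen (U i)) (hxU : ∀ i, x i ∈ U i)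
    (hx : ∀ i j, i < j → x i ∉ U j) :
    ¬ ∃ S ⊆ range x, S.Countable ∧ range x ⊆ closure S := by
  rintro ⟨S, hSx, hS, hdense⟩
  obtain ⟨T, rfl, hinj⟩ := exists_image_eq_injOn_of_subset_range hSx
  obtain ⟨j, hj⟩ := hbdd T (countable_of_injective_of_countable_image hinj hS)
  obtain ⟨_, hxiU, i, hi, rfl⟩ :=
    mem_closure_iff.1 (hdense (mem_range_self j)) (U j) (hU j) (hxU j)
  exact hx i j (hj i hi) hxiU

open Cardinal in
/-- In a hereditarily separable space there is no strictly decreasing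
ω₁-indexed chain of open sets. -/
theorem hereditarilySeparable_no_decreasing_omega1_chain
    {X : Type*} [TopologicalSpace X]
    (hHS : ∀ A : Set X, ∃ S : Set X, S ⊆ A ∧ S.Countable ∧ A ⊆ closure S) :
    ¬ ∃ O : Ordinal → Set X,
      (∀ α < (aleph 1).ord, IsOpen (O α)) ∧
      (∀ α β : Ordinal, α < β → β < (aleph 1).ord → O β ⊂ O α) := by
  rintro ⟨O, hopen, hchain⟩
  rw [ord_aleph] at hopen hchain
  have hsucc (α : Iio ω₁) : (α : Ordinal) + 1 < ω₁ := (isSuccLimit_omega 1).add_one_lt α.2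
  have hdrop (α : Iio ω₁) : ∃ x ∈ O α, x ∉ O (α + 1) :=
    not_subset.1 (hchain α _ (lt_add_one _) (hsucc α)).2
  choose x hxO hxO' using hdrop
  refine not_separable_range_of_forall_lt_notMem
    (fun s hs => exists_forall_lt_of_countable_Iio_omega_one hs)
    (fun α => hopen α α.2) hxO (fun α β hαβ hxβ => hxO' α ?_) (hHS (range x))
  rcases (Order.add_one_le_of_lt (α := Ordinal) hαβ).lt_or_eq with hlt | heq
  · exact (hchain _ _ hlt β.2).1 hxβ
  · rwa [heq]
end

section
/- A topology t on X is short if and only if it is both hereditarily Lindelöf and hereditarily separable. -/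
open Cardinal Ordinal Set

/-!
A strictly increasing ω₁-chain of open sets is an open cover of its union without a countable
subcover, since countably many indices below ω₁ are bounded below ω₁. Conversely, if an open cover
of `A` has no countable subcover, choose transfinitely `u α ∈ U` not covered by the earlier ones;
the unions `⋃ β < α, u β` then increase strictly.

Dually, for a strictly decreasing chain the points of the layers `O α \ O (α + 1)` form a set
without countable dense subset: a countable subset lies in layers below some `γ`, so it misses the
neighbourhood `O γ` of a point of layer `γ`. If `A` has no countable dense subset, choose
transfinitely `x α ∈ A` outside the closure of the earlier points; the complements of these
closures decrease strictly.
-/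

namespace Ordinal

theorem countable_Iio_of_lt_omega_one {α : Ordinal} (h : α < ω₁) : (Iio α).Countable := by
  rw [← le_aleph0_iff_set_countable, Cardinal.mk_Iio_ordinal, lift_le_aleph0, ← lt_aleph_one_iff,
    ← lt_ord, ord_aleph]
  exact h

theorem add_one_lt_omega_one {α : Ordinal} (h : α < ω₁) : α + 1 < ω₁ :=
  (isSuccLimit_omega 1).add_one_lt h

theorem exists_lt_omega_one_subset_Iio {s : Set Ordinal} (hs : s.Countable) (h : s ⊆ Iio ω₁) :
    ∃ γ < ω₁, s ⊆ Iio γ := by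
  have := hs.to_subtype
  refine ⟨⨆ a : s, (a : Ordinal) + 1, iSup_lt_omega_one fun a => add_one_lt_omega_one (h a.2),
    fun a ha => ?_⟩
  exact (lt_add_one _).trans_le (Ordinal.le_iSup (fun a : s => (a : Ordinal) + 1) ⟨a, ha⟩)

theorem exists_seq_omega_one_of_forall_countable_exists {β : Type*} (P : β → Prop)
    (R : Set β → β → Prop) (h : ∀ s : Set β, s.Countable → (∀ x ∈ s, P x) → ∃ y, P y ∧ R s y) :
    ∃ f : Ordinal → β, ∀ α < ω₁, P (f α) ∧ R (f '' Iio α) (f α) := by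
  classical
  have : Nonempty β := let ⟨y, _⟩ := h ∅ countable_empty (by simp); ⟨y⟩
  let next (s : Set β) : β :=
    if hs : s.Countable ∧ ∀ x ∈ s, P x then (h s hs.1 hs.2).choose else Classical.arbitrary β
  let f : Ordinal → β := Ordinal.lt_wf.fix fun α ih => next (range fun γ : Iio α => ih γ γ.2)
  have hf (α : Ordinal) : f α = next (f '' Iio α) := by
    rw [image_eq_range]; exact Ordinal.lt_wf.fix_eq _ α
  refine ⟨f, fun α => ?_⟩
  induction α using WellFoundedLT.induction with
  | _ α ih =>
    intro hα
    have hs : (f '' Iio α).Countable ∧ ∀ x ∈ f '' Iio α, P x :=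
      ⟨(countable_Iio_of_lt_omega_one hα).image f,
        forall_mem_image.2 fun γ hγ => (ih γ hγ (lt_trans hγ hα)).1⟩
    simp only [hf α, next, dif_pos hs]
    exact (h _ hs.1 hs.2).choose_spec

end Ordinal

section

variable {X : Type*}

theorem StrictMonoOn.not_countable_subcover {O : Ordinal → Set X}
    (hO : StrictMonoOn O (Iio ω₁)) {V : Set (Set X)} (hV : V ⊆ O '' Iio ω₁)
    (hVc : V.Countable) : ¬ ⋃₀ (O '' Iio ω₁) ⊆ ⋃₀ V := by
  intro hcov
  choose! ι hι using hV
  obtain ⟨γ, hγ, hιγ⟩ := exists_lt_omega_one_subset_Iio (hVc.image ι)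
    (image_subset_iff.2 fun v hv => (hι hv).1)
  have hγ1 := add_one_lt_omega_one hγ
  obtain ⟨x, hx, hxγ⟩ := exists_of_ssubset (hO hγ hγ1 (lt_add_one _))
  obtain ⟨v, hv, hxv⟩ := hcov (mem_sUnion_of_mem hx (mem_image_of_mem O hγ1))
  rw [← (hι hv).2] at hxv
  exact hxγ (hO.monotoneOn (hι hv).1 hγ (hιγ (mem_image_of_mem ι hv)).le hxv)

variable [TopologicalSpace X]

theorem StrictAntiOn.exists_not_separable {O : Ordinal → Set X}
    (hO : ∀ α < ω₁, IsOpen (O α)) (hanti : StrictAntiOn O (Iio ω₁)) :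
    ∃ A : Set X, ∀ S ⊆ A, S.Countable → ¬ A ⊆ closure S := by
  refine ⟨⋃ α ∈ Iio ω₁, O α \ O (α + 1), fun S hSA hS hdense => ?_⟩
  have hlayer := fun x (hx : x ∈ S) => mem_iUnion₂.1 (hSA hx)
  choose! ι hιω hι using hlayer
  obtain ⟨γ, hγ, hιγ⟩ := exists_lt_omega_one_subset_Iio (hS.image ι) (image_subset_iff.2 hιω)
  obtain ⟨x, hxγ, hxγ1⟩ := exists_of_ssubset
    (hanti hγ (add_one_lt_omega_one hγ) (lt_add_one _))
  obtain ⟨s, hsγ, hsS⟩ :=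
    mem_closure_iff.1 (hdense (mem_biUnion hγ ⟨hxγ, hxγ1⟩)) (O γ) (hO γ hγ) hxγ
  have hιs : ι s < γ := hιγ (mem_image_of_mem ι hsS)
  exact (hι s hsS).2 (hanti.antitoneOn (add_one_lt_omega_one (hιω s hsS)) hγ
    (Order.add_one_le_of_lt hιs) hsγ)

theorem exists_strictMonoOn_isOpen_of_not_countable_subcover {A : Set X} {U : Set (Set X)}
    (hU : ∀ u ∈ U, IsOpen u) (hAU : A ⊆ ⋃₀ U) (h : ∀ V ⊆ U, V.Countable → ¬ A ⊆ ⋃₀ V) :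
    ∃ O : Ordinal → Set X, (∀ α < ω₁, IsOpen (O α)) ∧ StrictMonoOn O (Iio ω₁) := by
  obtain ⟨u, hu⟩ := exists_seq_omega_one_of_forall_countable_exists (· ∈ U)
    (fun s v => ¬ v ⊆ ⋃₀ s) fun s hs hsU => by
      obtain ⟨x, hxA, hxs⟩ := not_subset.1 (h s hsU hs)
      obtain ⟨v, hv, hxv⟩ := hAU hxA
      exact ⟨v, hv, fun hvs => hxs (hvs hxv)⟩
  refine ⟨fun α => ⋃₀ (u '' Iio α), fun α hα => isOpen_sUnion ?_, fun α hα β _ hαβ => ?_⟩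
  · exact forall_mem_image.2 fun β hβ => hU _ (hu β (lt_trans hβ hα)).1
  · exact ssubset_of_subset_not_subset (sUnion_mono (image_mono (Iio_subset_Iio hαβ.le)))
      fun hβα => (hu α hα).2 ((subset_sUnion_of_mem (mem_image_of_mem u hαβ)).trans hβα)

theorem exists_strictAntiOn_isOpen_of_not_separable {A : Set X}
    (h : ∀ S ⊆ A, S.Countable → ¬ A ⊆ closure S) :
    ∃ O : Ordinal → Set X, (∀ α < ω₁, IsOpen (O α)) ∧ StrictAntiOn O (Iio ω₁) := by
  obtain ⟨x, hx⟩ := exists_seq_omega_one_of_forall_countable_exists (· ∈ A)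
    (fun s y => y ∉ closure s) fun s hs hsA => not_subset.1 (h s hsA hs)
  refine ⟨fun α => (closure (x '' Iio α))ᶜ, fun α _ => isClosed_closure.isOpen_compl,
    fun α hα β _ hαβ => compl_lt_compl_iff_lt.2 ?_⟩
  exact ssubset_of_subset_not_subset (closure_mono (image_mono (Iio_subset_Iio hαβ.le)))
    fun hβα => (hx α hα).2 (hβα (subset_closure (mem_image_of_mem x hαβ)))

end

open Cardinal in
/-- A topology is short iff it is hereditarily Lindelöf and hereditarily separable. -/
theorem short_iff_hereditarilyLindelof_and_hereditarilySeparable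
    {X : Type*} [TopologicalSpace X] :
    ((¬ ∃ O : Ordinal → Set X,
        (∀ α < (aleph 1).ord, IsOpen (O α)) ∧
        (∀ α β : Ordinal, α < β → β < (aleph 1).ord → O α ⊂ O β)) ∧
     (¬ ∃ O : Ordinal → Set X,
        (∀ α < (aleph 1).ord, IsOpen (O α)) ∧
        (∀ α β : Ordinal, α < β → β < (aleph 1).ord → O β ⊂ O α)))
    ↔
    ((∀ (A : Set X) (U : Set (Set X)), (∀ u ∈ U, IsOpen u) → A ⊆ ⋃₀ U →
        ∃ V ⊆ U, V.Countable ∧ A ⊆ ⋃₀ V) ∧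
     (∀ A : Set X, ∃ S : Set X, S ⊆ A ∧ S.Countable ∧ A ⊆ closure S)) := by
  simp only [ord_aleph]
  constructor
  · rintro ⟨hinc, hdec⟩
    refine ⟨fun A U hU hAU => ?_, fun A => ?_⟩
    · by_contra! h
      obtain ⟨O, hO, hmono⟩ := exists_strictMonoOn_isOpen_of_not_countable_subcover hU hAU h
      exact hinc ⟨O, hO, fun α β hαβ hβ => hmono (hαβ.trans hβ) hβ hαβ⟩
    · by_contra! h
      obtain ⟨O, hO, hanti⟩ := exists_strictAntiOn_isOpen_of_not_separable h
      exact hdec ⟨O, hO, fun α β hαβ hβ => hanti (hαβ.trans hβ) hβ hαβ⟩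
  · rintro ⟨hL, hS⟩
    constructor
    · rintro ⟨O, hO, hmono⟩
      obtain ⟨V, hVO, hVc, hcov⟩ := hL _ (O '' Iio ω₁) (forall_mem_image.2 hO) subset_rfl
      exact StrictMonoOn.not_countable_subcover (fun α _ β hβ hαβ => hmono α β hαβ hβ) hVO hVc hcov
    · rintro ⟨O, hO, hanti⟩
      obtain ⟨A, hA⟩ := StrictAntiOn.exists_not_separable hO fun α _ β hβ hαβ => hanti α β hαβ hβ
      obtain ⟨S, hSA, hSc, hdense⟩ := hS A
      exact hA S hSA hSc hdense
end

section
/- Let (A, ≤) be a short chain, i.e., neither ω₁ nor its reverse order embeds into (A, <). Then the upper order topology t_u on A, generated by the sets L(a) := {b ∈ A : b < a} for a ∈ A, is a short topology: neither ω₁ order-embeds into (t_u, ⊊) nor into (t_u, ⊋). -/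
/-!
Every open set of the upper order topology is a lower set. If `O` is a strictly increasing
`ω₁`-sequence of lower sets, pick `x α ∈ O (α + 1) \ O α`; for `α < β` the point `x α` lies in
`O β` while `x β` does not, so `x α < x β`, and `x` embeds `ω₁` into `A`. A strictly decreasing
sequence of lower sets has complements forming an increasing sequence of lower sets of `Aᵒᵈ`,
giving a reversed embedding. Shortness of `A` rules out both.
-/

open Cardinal Order Topology

theorem isLowerSet_of_isOpen_generateFrom_Iio {A : Type*} [LinearOrder A] {U : Set A}
    (hU : IsOpen[TopologicalSpace.generateFrom {S | ∃ a : A, S = Set.Iio a}] U) :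
    IsLowerSet U := by
  let _ : TopologicalSpace A := .generateFrom {S | ∃ a : A, S = Set.Iio a}
  have : Topology.IsLower A :=
    ⟨congrArg TopologicalSpace.generateFrom <| Set.ext fun S => by simp [eq_comm]⟩
  exact Topology.IsLower.isLowerSet_of_isOpen hU

theorem exists_omega1_chain_lift {A : Type*} {r : A → A → Prop}
    (h : ∃ g : Ordinal.{u} → A, ∀ α β, α < β → β < (ℵ_ 1).ord → r (g α) (g β)) :
    ∃ g : Ordinal.{v} → A, ∀ α β, α < β → β < (ℵ_ 1).ord → r (g α) (g β) := by
  obtain ⟨g, hg⟩ := h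
  have hω₁ : Ordinal.lift.{v} (ℵ_ 1 : Cardinal.{u}).ord =
      Ordinal.lift.{u} (ℵ_ 1 : Cardinal.{v}).ord := by
    simp
  have hdown : ∀ α < (ℵ_ 1 : Cardinal.{v}).ord, ∃ α' : Ordinal.{u},
      Ordinal.lift.{v} α' = Ordinal.lift.{u} α := fun α hα =>
    Ordinal.mem_range_lift_of_le (hω₁ ▸ (Ordinal.lift_lt.mpr hα).le)
  choose! down hdown using hdown
  refine ⟨g ∘ down, fun α β hαβ hβ => hg _ _ ?_ ?_⟩
  · rw [← Ordinal.lift_lt.{v}, hdown α (hαβ.trans hβ), hdown β hβ]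
    exact Ordinal.lift_lt.mpr hαβ
  · rw [← Ordinal.lift_lt.{v}, hdown β hβ, hω₁]
    exact Ordinal.lift_lt.mpr hβ

theorem exists_strictMono_of_strictMono_isLowerSet {A : Type*} [LinearOrder A] {o : Ordinal}
    (ho : IsSuccLimit o) {O : Ordinal → Set A} (hlow : ∀ α < o, IsLowerSet (O α))
    (hO : ∀ α β, α < β → β < o → O α ⊂ O β) :
    ∃ x : Ordinal → A, ∀ α β, α < β → β < o → x α < x β := by
  have hstep : ∀ α < o, (O (succ α) \ O α).Nonempty := fun α hα =>
    Set.nonempty_of_ssubset (hO α _ (lt_succ α) (ho.succ_lt hα))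
  have : Nonempty A := (hstep 0 ho.bot_lt).nonempty
  choose! x hx using hstep
  refine ⟨x, fun α β hαβ hβ => lt_of_not_ge fun hle => (hx β hβ).2 (hlow β hβ hle ?_)⟩
  obtain hlt | heq := (succ_le_of_lt hαβ).lt_or_eq
  · exact (hO _ _ hlt hβ).subset (hx α (hαβ.trans hβ)).1
  · exact heq ▸ (hx α (hαβ.trans hβ)).1

open Cardinal in
/-- The upper order topology of a short chain is a short topology. -/
theorem short_chain_upper_order_topology_short
    {A : Type*} [LinearOrder A]
    (hshort : (¬ ∃ g : Ordinal → A,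
                  ∀ α β : Ordinal, α < β → β < (aleph 1).ord → g α < g β) ∧
              (¬ ∃ g : Ordinal → A,
                  ∀ α β : Ordinal, α < β → β < (aleph 1).ord → g β < g α)) :
    (¬ ∃ O : Ordinal → Set A,
        (∀ α < (aleph 1).ord,
          @IsOpen _ (TopologicalSpace.generateFrom {S | ∃ a : A, S = Set.Iio a}) (O α)) ∧
        (∀ α β : Ordinal, α < β → β < (aleph 1).ord → O α ⊂ O β)) ∧
    (¬ ∃ O : Ordinal → Set A,
        (∀ α < (aleph 1).ord,
          @IsOpen _ (TopologicalSpace.generateFrom {S | ∃ a : A, S = Set.Iio a}) (O α)) ∧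
        (∀ α β : Ordinal, α < β → β < (aleph 1).ord → O β ⊂ O α)) := by
  refine ⟨fun ⟨O, hopen, hO⟩ => hshort.1 ?_, fun ⟨O, hopen, hO⟩ => hshort.2 ?_⟩
  · exact exists_omega1_chain_lift <|
      exists_strictMono_of_strictMono_isLowerSet (isSuccLimit_ord (aleph0_le_aleph 1))
        (fun α hα => isLowerSet_of_isOpen_generateFrom_Iio (hopen α hα)) hO
  · exact exists_omega1_chain_lift (r := fun a b => b < a) <|
      exists_strictMono_of_strictMono_isLowerSet (A := Aᵒᵈ) (O := fun α => (O α)ᶜ)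
        (isSuccLimit_ord (aleph0_le_aleph 1))
        (fun α hα => (isLowerSet_of_isOpen_generateFrom_Iio (hopen α hα)).compl.toDual)
        (fun α β hαβ hβ => compl_lt_compl_iff_lt.mpr (hO α β hαβ hβ))
end
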